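/- Let (A, φ) be a B-valued probability space and a ∈ A. Then a is B-even (all odd B-valued moments vanish) if and only if all odd B-valued cumulants of a vanish: k_m(a,...,a) = c^{(m)}(a ⊗ b_2 a ⊗ ⋯ ⊗ b_m a) = 0_B for all odd m and all b_2,...,b_m ∈ B. -/

import Mathlib

/-!  Noncrossing partitions of an ordered tuple of algebra elements, encoded as
nested structures ("forests"), together with the `B`-valued multiplicative
extension `ĉ(π)` of a family of cumulant functionals `c`.

A noncrossing partition of `(a₁, …, aₙ)` is the same as a forest: the outer blocks,
in order, are trees; a tree consists of the block containing its first letter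
together with, for each later letter of that block, the (noncrossing) partition
nested in the gap preceding that letter.  The multiplicative extension evaluates
the deepest blocks by `c` and multiplies the resulting `B`-values into the next
letter from the left, and multiplies the values of the outer blocks. -/

mutual
  /-- A tree: one block together with the partitions nested in its gaps. -/
  inductive NCTree (A : Type u) : Type u where
    | node : A → NCGaps A → NCTree A
  /-- The later letters of a block, each preceded by a nested forest. -/
  inductive NCGaps (A : Type u) : Type u where
    | nil : NCGaps A
    | cons : NCForest A → A → NCGaps A → NCGaps A
  /-- A forest: the sequence of outer blocks (with their nested contents). -/
  inductive NCForest (A : Type u) : Type u where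
    | nil : NCForest A
    | cons : NCTree A → NCForest A → NCForest A
end

variable {A : Type u}

mutual
  /-- The letters (arguments) of a tree, in order. -/
  def NCTree.letters : NCTree A → List A
    | .node a g => a :: g.letters
  /-- The letters of the gaps part of a block. -/
  def NCGaps.letters : NCGaps A → List A
    | .nil => []
    | .cons f x g => f.letters ++ x :: g.letters
  /-- The letters of a forest, in order. -/
  def NCForest.letters : NCForest A → List A
    | .nil => []
    | .cons t f => t.letters ++ f.letters
end

mutual
  /-- The value `ĉ(π)` on a tree: apply the cumulant `c` to the block, with the
  values of nested partitions multiplied into the following block letter. -/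
  def NCTree.eval [Mul A] [One A] (c : List A → A) : NCTree A → A
    | .node a g => c (a :: g.evalArgs c)
  /-- The arguments contributed by the gaps of a block. -/
  def NCGaps.evalArgs [Mul A] [One A] (c : List A → A) : NCGaps A → List A
    | .nil => []
    | .cons f x g => (f.eval c * x) :: g.evalArgs c
  /-- The value `ĉ(π)` on a forest: the product of the values of the outer blocks. -/
  def NCForest.eval [Mul A] [One A] (c : List A → A) : NCForest A → A
    | .nil => 1
    | .cons t f => t.eval c * f.eval c
end

/-- The number of letters of a block beyond its first one. -/
def NCGaps.blockLen : NCGaps A → ℕ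
  | .nil => 0
  | .cons _ _ g => g.blockLen + 1

mutual
  /-- Every block of the tree has even size. -/
  def NCTree.evenBlocks : NCTree A → Prop
    | .node _ g => Even (g.blockLen + 1) ∧ g.evenBlocks
  /-- Every block nested in the gaps has even size. -/
  def NCGaps.evenBlocks : NCGaps A → Prop
    | .nil => True
    | .cons f _ g => f.evenBlocks ∧ g.evenBlocks
  /-- Every block of the forest has even size. -/
  def NCForest.evenBlocks : NCForest A → Prop
    | .nil => True
    | .cons t f => t.evenBlocks ∧ f.evenBlocks
end


/-! A forest with an odd number of letters has a block of odd size. If all odd cumulants of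
letters `b a` (`b ∈ B`) vanish, the value of such a forest vanishes: an odd block evaluates to
zero, and a zero value propagates outwards because it enters the enclosing block as a zero
argument, while a cumulant with a zero argument vanishes. As `c` is not assumed multilinear, this
last fact is derived from the moment–cumulant formula and `φ 0 = 0` by induction on the length,
as is the left `B`-linearity `c (b x :: t) = b c (x :: t)` that reduces arbitrary first letters
`b a` to `a`. Hence odd cumulants vanish ⇒ odd moments vanish. Conversely, the moment–cumulant
formula writes an odd cumulant as the odd moment minus the values of the forests other than
the one-block forest; all their blocks are strictly shorter, so these vanish by induction. -/

namespace NCGaps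

def ofList : List A → NCGaps A
  | [] => .nil
  | x :: t => .cons .nil x (ofList t)

@[simp] theorem letters_ofList (t : List A) : (ofList t).letters = t := by
  induction t with
  | nil => rfl
  | cons x t ih => simp [ofList, letters, NCForest.letters, ih]

@[simp] theorem evalArgs_ofList [Monoid A] (c : List A → A) (t : List A) :
    (ofList t).evalArgs c = t := by
  induction t with
  | nil => rfl
  | cons x t ih => simp [ofList, evalArgs, NCForest.eval, ih]

theorem evalArgs_length [Mul A] [One A] (c : List A → A) :
    ∀ g : NCGaps A, (g.evalArgs c).length = g.blockLen
  | .nil => rfl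
  | .cons _ _ g => by simp [evalArgs, blockLen, evalArgs_length c g]

theorem blockLen_le_length : ∀ g : NCGaps A, g.blockLen ≤ g.letters.length
  | .nil => le_rfl
  | .cons _ _ g => by
    have := blockLen_le_length g
    simp only [blockLen, letters, List.length_append, List.length_cons]
    omega

end NCGaps

theorem NCForest.eq_nil_of_letters_eq_nil {f : NCForest A} (h : f.letters = []) : f = .nil := by
  rcases f with _ | ⟨⟨x, g⟩, f⟩
  · rfl
  · simp [NCForest.letters, NCTree.letters] at h

theorem NCGaps.eq_ofList_of_blockLen_eq :
    ∀ g : NCGaps A, g.blockLen = g.letters.length → g = ofList g.letters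
  | .nil, _ => rfl
  | .cons f x g, h => by
    simp only [blockLen, letters, List.length_append, List.length_cons] at h
    have := g.blockLen_le_length
    have hf : f = .nil :=
      NCForest.eq_nil_of_letters_eq_nil (List.eq_nil_of_length_eq_zero (by omega))
    subst hf
    simp [letters, NCForest.letters, ofList, ← eq_ofList_of_blockLen_eq g (by omega)]

theorem NCForest.eq_cons_of_letters_eq_cons {f : NCForest A} {x : A} {t : List A}
    (h : f.letters = x :: t) :
    ∃ g rest, f = .cons (.node x g) rest ∧ g.letters ++ rest.letters = t := by
  rcases f with _ | ⟨⟨y, g⟩, rest⟩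
  · simp [NCForest.letters] at h
  · simp only [NCForest.letters, NCTree.letters, List.cons_append, List.cons.injEq] at h
    exact ⟨g, rest, by rw [h.1], h.2⟩

namespace NCForest

def oneBlock (x : A) (t : List A) : NCForest A := .cons (.node x (.ofList t)) .nil

@[simp] theorem letters_oneBlock (x : A) (t : List A) : (oneBlock x t).letters = x :: t := by
  simp [oneBlock, letters, NCTree.letters]

@[simp] theorem eval_oneBlock [Monoid A] (c : List A → A) (x : A) (t : List A) :
    (oneBlock x t).eval c = c (x :: t) := by
  simp [oneBlock, eval, NCTree.eval]

end NCForest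

mutual
  def NCTree.maxBlockSize : NCTree A → ℕ
    | .node _ g => max (g.blockLen + 1) g.maxBlockSize
  def NCGaps.maxBlockSize : NCGaps A → ℕ
    | .nil => 0
    | .cons f _ g => max f.maxBlockSize g.maxBlockSize
  def NCForest.maxBlockSize : NCForest A → ℕ
    | .nil => 0
    | .cons t f => max t.maxBlockSize f.maxBlockSize
end

mutual
  theorem NCTree.maxBlockSize_le_length : ∀ t : NCTree A, t.maxBlockSize ≤ t.letters.length
    | .node _ g => by
      have := g.blockLen_le_length
      have := g.maxBlockSize_le_length
      simp only [NCTree.maxBlockSize, NCTree.letters, List.length_cons]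
      omega
  theorem NCGaps.maxBlockSize_le_length : ∀ g : NCGaps A, g.maxBlockSize ≤ g.letters.length
    | .nil => le_rfl
    | .cons f _ g => by
      have := f.maxBlockSize_le_length
      have := g.maxBlockSize_le_length
      simp only [NCGaps.maxBlockSize, NCGaps.letters, List.length_append, List.length_cons]
      omega
  theorem NCForest.maxBlockSize_le_length : ∀ f : NCForest A, f.maxBlockSize ≤ f.letters.length
    | .nil => le_rfl
    | .cons t f => by
      have := t.maxBlockSize_le_length
      have := f.maxBlockSize_le_length
      simp only [NCForest.maxBlockSize, NCForest.letters, List.length_append]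
      omega
end

theorem NCForest.maxBlockSize_le_of_ne_oneBlock {f : NCForest A} {x : A} {t : List A}
    (hf : f.letters = x :: t) (hne : f ≠ oneBlock x t) : f.maxBlockSize ≤ t.length := by
  obtain ⟨g, rest, rfl, rfl⟩ := eq_cons_of_letters_eq_cons hf
  have := g.blockLen_le_length
  have := g.maxBlockSize_le_length
  have := rest.maxBlockSize_le_length
  simp only [maxBlockSize, NCTree.maxBlockSize, List.length_append]
  rcases rest with _ | ⟨r, rest⟩
  · have : g.blockLen ≠ g.letters.length := fun h => hne <| by
      simp only [oneBlock, letters, List.append_nil, ← NCGaps.eq_ofList_of_blockLen_eq g h]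
    simp only [maxBlockSize, letters, List.length_nil] at *
    omega
  · have : r.letters ≠ [] := by cases r; simp [NCTree.letters]
    have := List.length_pos_iff.2 this
    simp only [letters, List.length_append] at *
    omega

mutual
  theorem NCForest.finite_setOf_letters_eq :
      ∀ l : List A, {f : NCForest A | f.letters = l}.Finite
    | [] => (Set.finite_singleton .nil).subset fun _ hf => NCForest.eq_nil_of_letters_eq_nil hf
    | x :: t => by
      refine (Set.finite_iUnion fun i : Fin (t.length + 1) =>
        ((NCGaps.finite_setOf_letters_eq (t.take i)).prod
          (NCForest.finite_setOf_letters_eq (t.drop i))).image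
            fun p => NCForest.cons (.node x p.1) p.2).subset ?_
      intro f hf
      obtain ⟨g, rest, rfl, rfl⟩ := NCForest.eq_cons_of_letters_eq_cons hf
      exact Set.mem_iUnion.2 ⟨⟨g.letters.length, by simp⟩, (g, rest), by simp, rfl⟩
  termination_by l => l.length
  decreasing_by
    all_goals
      have := i.isLt
      simp only [List.length_take, List.length_drop, List.length_cons]
      omega
  theorem NCGaps.finite_setOf_letters_eq (l : List A) : {g : NCGaps A | g.letters = l}.Finite := by
    refine ((Set.finite_singleton .nil).union <| Set.finite_iUnion fun i : Fin l.length =>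
      ((NCForest.finite_setOf_letters_eq (l.take i)).prod
        (NCGaps.finite_setOf_letters_eq (l.drop (i + 1)))).image
          fun p => NCGaps.cons p.1 l[i] p.2).subset ?_
    rintro (_ | ⟨f, y, g⟩) hg
    · exact Or.inl rfl
    · subst hg
      refine Or.inr (Set.mem_iUnion.2 ⟨⟨f.letters.length, ?_⟩, (f, g), ?_, ?_⟩) <;>
        simp [NCGaps.letters]
  termination_by l.length
  decreasing_by
    all_goals
      have := i.isLt
      simp only [List.length_take, List.length_drop]
      omega
end

namespace NCForest

noncomputable def withLetters (l : List A) : Finset (NCForest A) :=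
  (finite_setOf_letters_eq l).toFinset

@[simp] theorem mem_withLetters {f : NCForest A} {l : List A} :
    f ∈ withLetters l ↔ f.letters = l := by
  simp [withLetters]

def setHead (y : A) : NCForest A → NCForest A
  | .nil => .nil
  | .cons (.node _ g) f => .cons (.node y g) f

theorem letters_setHead {f : NCForest A} {x : A} {t : List A} (hf : f.letters = x :: t) (y : A) :
    (f.setHead y).letters = y :: t := by
  obtain ⟨g, rest, rfl, rfl⟩ := eq_cons_of_letters_eq_cons hf
  simp [setHead, letters, NCTree.letters]

theorem setHead_setHead (f : NCForest A) (y z : A) : (f.setHead y).setHead z = f.setHead z := by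
  rcases f with _ | ⟨⟨x, g⟩, f⟩ <;> rfl

@[simp] theorem setHead_oneBlock (x y : A) (t : List A) :
    (oneBlock x t).setHead y = oneBlock y t :=
  rfl

theorem setHead_eq_self {f : NCForest A} {x : A} {t : List A} (hf : f.letters = x :: t) :
    f.setHead x = f := by
  obtain ⟨g, rest, rfl, -⟩ := eq_cons_of_letters_eq_cons hf
  rfl

theorem sum_withLetters_cons {M : Type*} [AddCommMonoid M] (F : NCForest A → M)
    (x y : A) (t : List A) :
    ∑ f ∈ withLetters (y :: t), F f = ∑ f ∈ withLetters (x :: t), F (f.setHead y) :=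
  Finset.sum_nbij' (setHead x) (setHead y)
    (fun _ hf => mem_withLetters.2 (letters_setHead (mem_withLetters.1 hf) x))
    (fun _ hf => mem_withLetters.2 (letters_setHead (mem_withLetters.1 hf) y))
    (fun _ hf => by rw [setHead_setHead, setHead_eq_self (mem_withLetters.1 hf)])
    (fun _ hf => by rw [setHead_setHead, setHead_eq_self (mem_withLetters.1 hf)])
    (fun _ hf => by rw [setHead_setHead, setHead_eq_self (mem_withLetters.1 hf)])

end NCForest

open NCForest

def MomentCumulantFormula [Semiring A] (φ : A → A) (c : List A → A) : Prop :=
  ∀ l : List A, l ≠ [] → φ l.prod = ∑ᶠ f ∈ {f : NCForest A | f.letters = l}, f.eval c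

section MomentCumulant

open Classical

variable [Semiring A] {φ : A → A} {c : List A → A}

theorem MomentCumulantFormula.moment_eq_sum (hmc : MomentCumulantFormula φ c) {l : List A}
    (hl : l ≠ []) : φ l.prod = ∑ f ∈ withLetters l, f.eval c := by
  rw [hmc l hl, finsum_mem_eq_finite_toFinset_sum _ (finite_setOf_letters_eq l), withLetters]

theorem MomentCumulantFormula.moment_cons_eq (hmc : MomentCumulantFormula φ c)
    (x : A) (t : List A) :
    φ (x :: t).prod =
      c (x :: t) + ∑ f ∈ (withLetters (x :: t)).erase (oneBlock x t), f.eval c := by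
  rw [hmc.moment_eq_sum (List.cons_ne_nil x t),
    ← Finset.add_sum_erase _ _ (mem_withLetters.2 (letters_oneBlock x t)), eval_oneBlock]

theorem MomentCumulantFormula.cumulant_eq_moment (hmc : MomentCumulantFormula φ c)
    {x : A} {t : List A}
    (h : ∀ f : NCForest A, f.letters = x :: t → f.maxBlockSize ≤ t.length → f.eval c = 0) :
    c (x :: t) = φ (x :: t).prod := by
  rw [hmc.moment_cons_eq, Finset.sum_eq_zero, add_zero]
  intro f hf
  obtain ⟨hne, hf⟩ := Finset.mem_erase.1 hf
  exact h f (mem_withLetters.1 hf) (maxBlockSize_le_of_ne_oneBlock (mem_withLetters.1 hf) hne)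

end MomentCumulant

section LeftMul

open Classical

variable [Ring A] {φ : A → A} {c : List A → A}

theorem MomentCumulantFormula.cumulant_mul_cons (hmc : MomentCumulantFormula φ c) {b : A}
    (hb : ∀ y, φ (b * y) = b * φ y) (x : A) (t : List A) : c (b * x :: t) = b * c (x :: t) := by
  induction hn : t.length using Nat.strong_induction_on generalizing x t with | _ n ih =>
  subst hn
  have hscale : ∀ f ∈ (withLetters (x :: t)).erase (oneBlock x t),
      (f.setHead (b * x)).eval c = b * f.eval c := by
    intro f hf
    obtain ⟨hne, hf⟩ := Finset.mem_erase.1 hf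
    have hmax := maxBlockSize_le_of_ne_oneBlock (mem_withLetters.1 hf) hne
    obtain ⟨g, rest, rfl, -⟩ := eq_cons_of_letters_eq_cons (mem_withLetters.1 hf)
    simp only [maxBlockSize, NCTree.maxBlockSize, max_le_iff] at hmax
    simp only [setHead, eval, NCTree.eval, ← mul_assoc]
    rw [ih _ (by rw [NCGaps.evalArgs_length]; omega) x _ rfl]
  have hsum : ∑ f ∈ withLetters (b * x :: t), f.eval c
      = c (b * x :: t) + b * ∑ f ∈ (withLetters (x :: t)).erase (oneBlock x t), f.eval c := by
    rw [sum_withLetters_cons _ x,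
      ← Finset.add_sum_erase _ _ (mem_withLetters.2 (letters_oneBlock x t)), Finset.mul_sum,
      Finset.sum_congr rfl hscale, setHead_oneBlock, eval_oneBlock]
  have hmoment : φ (b * x :: t).prod = b * φ (x :: t).prod := by
    rw [List.prod_cons, List.prod_cons, mul_assoc, hb]
  rw [hmc.moment_eq_sum (List.cons_ne_nil _ t), hsum, hmc.moment_cons_eq, mul_add] at hmoment
  exact add_right_cancel hmoment

end LeftMul

section ZeroEntry

variable [MonoidWithZero A]

mutual
  theorem NCTree.eval_eq_zero_of_zero_mem {c : List A → A} {N : ℕ}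
      (hc : ∀ l : List A, l.length ≤ N → (0 : A) ∈ l → c l = 0) :
      ∀ t : NCTree A, t.maxBlockSize ≤ N → (0 : A) ∈ t.letters → t.eval c = 0
    | .node x g, hN, h0 => by
      simp only [NCTree.maxBlockSize, max_le_iff, NCTree.letters, List.mem_cons] at hN h0
      refine hc _ (by simp [NCGaps.evalArgs_length, hN.1]) ?_
      rcases h0 with rfl | h0
      · exact List.mem_cons_self
      · exact List.mem_cons_of_mem _ (NCGaps.zero_mem_evalArgs_of_zero_mem hc g hN.2 h0)
  theorem NCGaps.zero_mem_evalArgs_of_zero_mem {c : List A → A} {N : ℕ}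
      (hc : ∀ l : List A, l.length ≤ N → (0 : A) ∈ l → c l = 0) :
      ∀ g : NCGaps A, g.maxBlockSize ≤ N → (0 : A) ∈ g.letters → (0 : A) ∈ g.evalArgs c
    | .cons f y g, hN, h0 => by
      simp only [NCGaps.maxBlockSize, max_le_iff, NCGaps.letters, List.mem_append,
        List.mem_cons] at hN h0
      simp only [NCGaps.evalArgs, List.mem_cons]
      rcases h0 with h0 | rfl | h0
      · rw [NCForest.eval_eq_zero_of_zero_mem hc f hN.1 h0, zero_mul]; exact Or.inl rfl
      · exact Or.inl (mul_zero _).symm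
      · exact Or.inr (NCGaps.zero_mem_evalArgs_of_zero_mem hc g hN.2 h0)
  theorem NCForest.eval_eq_zero_of_zero_mem {c : List A → A} {N : ℕ}
      (hc : ∀ l : List A, l.length ≤ N → (0 : A) ∈ l → c l = 0) :
      ∀ f : NCForest A, f.maxBlockSize ≤ N → (0 : A) ∈ f.letters → f.eval c = 0
    | .cons t f, hN, h0 => by
      simp only [NCForest.maxBlockSize, max_le_iff, NCForest.letters, List.mem_append] at hN h0
      rcases h0 with h0 | h0
      · rw [NCForest.eval, NCTree.eval_eq_zero_of_zero_mem hc t hN.1 h0, zero_mul]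
      · rw [NCForest.eval, NCForest.eval_eq_zero_of_zero_mem hc f hN.2 h0, mul_zero]
end

end ZeroEntry

theorem MomentCumulantFormula.cumulant_eq_zero_of_zero_mem [Semiring A] {φ : A → A}
    {c : List A → A} (hmc : MomentCumulantFormula φ c) (hφ : φ 0 = 0) {l : List A}
    (h0 : (0 : A) ∈ l) : c l = 0 := by
  induction hn : l.length using Nat.strong_induction_on generalizing l with | _ n ih =>
  subst hn
  obtain _ | ⟨x, t⟩ := l
  · simp at h0
  rw [hmc.cumulant_eq_moment, List.prod_eq_zero h0, hφ]
  intro f hf hmax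
  refine f.eval_eq_zero_of_zero_mem (fun l hl hl0 => ih l.length ?_ hl0 rfl) hmax (hf ▸ h0)
  rw [List.length_cons]
  omega

mutual
  theorem NCTree.even_length_of_evenBlocks :
      ∀ t : NCTree A, t.evenBlocks → Even t.letters.length
    | .node _ g, ⟨hb, hg⟩ => by
      have := NCGaps.even_length_add_blockLen_of_evenBlocks g hg
      simp only [NCTree.letters, List.length_cons, Nat.even_iff] at hb this ⊢
      omega
  theorem NCGaps.even_length_add_blockLen_of_evenBlocks :
      ∀ g : NCGaps A, g.evenBlocks → Even (g.letters.length + g.blockLen)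
    | .nil, _ => ⟨0, rfl⟩
    | .cons f _ g, ⟨hf, hg⟩ => by
      have := NCForest.even_length_of_evenBlocks f hf
      have := NCGaps.even_length_add_blockLen_of_evenBlocks g hg
      simp only [NCGaps.letters, NCGaps.blockLen, List.length_append, List.length_cons,
        Nat.even_iff] at *
      omega
  theorem NCForest.even_length_of_evenBlocks :
      ∀ f : NCForest A, f.evenBlocks → Even f.letters.length
    | .nil, _ => ⟨0, rfl⟩
    | .cons t f, ⟨ht, hf⟩ => by
      rw [NCForest.letters, List.length_append]
      exact (NCTree.even_length_of_evenBlocks t ht).add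
        (NCForest.even_length_of_evenBlocks f hf)
end

section OddBlock

variable [MonoidWithZero A] {c : List A → A} {S : Set A}

theorem NCForest.eval_mul_mem (hcS : ∀ l, ∀ x ∈ S, c l * x ∈ S) :
    ∀ f : NCForest A, ∀ x ∈ S, f.eval c * x ∈ S
  | .nil, x, hx => by rwa [eval, one_mul]
  | .cons (.node y g) f, x, hx => by
    rw [eval, mul_assoc]
    exact hcS _ _ (eval_mul_mem hcS f x hx)

theorem NCGaps.evalArgs_mem (hcS : ∀ l, ∀ x ∈ S, c l * x ∈ S) :
    ∀ g : NCGaps A, (∀ x ∈ g.letters, x ∈ S) → ∀ y ∈ g.evalArgs c, y ∈ S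
  | .nil, _ => by simp [evalArgs]
  | .cons f x g, hS => by
    simp only [letters, List.mem_append, List.mem_cons] at hS
    simp only [evalArgs, List.forall_mem_cons]
    exact ⟨f.eval_mul_mem hcS x (hS x (by simp)),
      evalArgs_mem hcS g fun y hy => hS y (by simp [hy])⟩

mutual
  theorem NCTree.eval_eq_zero_of_not_evenBlocks {N : ℕ}
      (hc0 : ∀ l : List A, (0 : A) ∈ l → c l = 0) (hcS : ∀ l, ∀ x ∈ S, c l * x ∈ S)
      (hodd : ∀ l : List A, (∀ x ∈ l, x ∈ S) → Odd l.length → l.length ≤ N →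
        c l = 0) :
      ∀ t : NCTree A, (∀ x ∈ t.letters, x ∈ S) → t.maxBlockSize ≤ N →
        ¬ t.evenBlocks → t.eval c = 0
    | .node x g, hS, hN, hne => by
      simp only [NCTree.letters, List.forall_mem_cons] at hS
      simp only [NCTree.maxBlockSize, max_le_iff] at hN
      simp only [NCTree.evenBlocks, not_and] at hne
      by_cases hg : g.evenBlocks
      · refine hodd _ ?_ ?_ (by simp [NCGaps.evalArgs_length, hN.1])
        · exact List.forall_mem_cons.2 ⟨hS.1, g.evalArgs_mem hcS hS.2⟩
        · simpa [NCGaps.evalArgs_length] using fun h => hne h hg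
      · exact hc0 _ (List.mem_cons_of_mem _
          (NCGaps.zero_mem_evalArgs_of_not_evenBlocks hc0 hcS hodd g hS.2 hN.2 hg))
  theorem NCGaps.zero_mem_evalArgs_of_not_evenBlocks {N : ℕ}
      (hc0 : ∀ l : List A, (0 : A) ∈ l → c l = 0) (hcS : ∀ l, ∀ x ∈ S, c l * x ∈ S)
      (hodd : ∀ l : List A, (∀ x ∈ l, x ∈ S) → Odd l.length → l.length ≤ N →
        c l = 0) :
      ∀ g : NCGaps A, (∀ x ∈ g.letters, x ∈ S) → g.maxBlockSize ≤ N →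
        ¬ g.evenBlocks → (0 : A) ∈ g.evalArgs c
    | .nil, _, _, hne => absurd trivial hne
    | .cons f x g, hS, hN, hne => by
      simp only [NCGaps.letters, List.mem_append, List.mem_cons] at hS
      simp only [NCGaps.maxBlockSize, max_le_iff] at hN
      simp only [NCGaps.evenBlocks, not_and] at hne
      simp only [NCGaps.evalArgs, List.mem_cons]
      by_cases hf : f.evenBlocks
      · exact Or.inr (NCGaps.zero_mem_evalArgs_of_not_evenBlocks hc0 hcS hodd g
          (fun y hy => hS y (by simp [hy])) hN.2 (hne hf))
      · rw [NCForest.eval_eq_zero_of_not_evenBlocks hc0 hcS hodd f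
          (fun y hy => hS y (by simp [hy])) hN.1 hf, zero_mul]
        exact Or.inl rfl
  theorem NCForest.eval_eq_zero_of_not_evenBlocks {N : ℕ}
      (hc0 : ∀ l : List A, (0 : A) ∈ l → c l = 0) (hcS : ∀ l, ∀ x ∈ S, c l * x ∈ S)
      (hodd : ∀ l : List A, (∀ x ∈ l, x ∈ S) → Odd l.length → l.length ≤ N →
        c l = 0) :
      ∀ f : NCForest A, (∀ x ∈ f.letters, x ∈ S) → f.maxBlockSize ≤ N →
        ¬ f.evenBlocks → f.eval c = 0
    | .nil, _, _, hne => absurd trivial hne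
    | .cons t f, hS, hN, hne => by
      simp only [NCForest.letters, List.mem_append] at hS
      simp only [NCForest.maxBlockSize, max_le_iff] at hN
      simp only [NCForest.evenBlocks, not_and] at hne
      by_cases ht : t.evenBlocks
      · rw [NCForest.eval, NCForest.eval_eq_zero_of_not_evenBlocks hc0 hcS hodd f
          (fun y hy => hS y (Or.inr hy)) hN.2 (hne ht), mul_zero]
      · rw [NCForest.eval, NCTree.eval_eq_zero_of_not_evenBlocks hc0 hcS hodd t
          (fun y hy => hS y (Or.inl hy)) hN.1 ht, zero_mul]
end

end OddBlock

theorem MomentCumulantFormula.odd_moments_eq_zero_iff [Semiring A] {φ : A → A}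
    {c : List A → A} (hmc : MomentCumulantFormula φ c) (hφ : φ 0 = 0) {S : Set A}
    (hcS : ∀ l, ∀ x ∈ S, c l * x ∈ S) :
    (∀ l : List A, (∀ x ∈ l, x ∈ S) → Odd l.length → φ l.prod = 0) ↔
      (∀ l : List A, (∀ x ∈ l, x ∈ S) → Odd l.length → c l = 0) := by
  have hc0 (l : List A) : (0 : A) ∈ l → c l = 0 := hmc.cumulant_eq_zero_of_zero_mem hφ
  have not_evenBlocks {f : NCForest A} (hf : Odd f.letters.length) : ¬ f.evenBlocks :=
    fun he => Nat.not_even_iff_odd.2 hf (f.even_length_of_evenBlocks he)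
  constructor
  · intro hmom l
    induction hn : l.length using Nat.strong_induction_on generalizing l with | _ n ih =>
    subst hn
    intro hS hl
    obtain _ | ⟨x, t⟩ := l
    · simp at hl
    rw [hmc.cumulant_eq_moment, hmom _ hS hl]
    intro f hf hmax
    refine f.eval_eq_zero_of_not_evenBlocks hc0 hcS
      (fun l hlS hl' hlen => ih _ (by rw [List.length_cons]; omega) l rfl hlS hl') (hf ▸ hS) hmax
      (not_evenBlocks (hf ▸ hl))
  · intro hcum l hS hl
    rw [hmc.moment_eq_sum (List.ne_nil_of_length_pos hl.pos)]
    refine Finset.sum_eq_zero fun f hf => ?_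
    rw [mem_withLetters] at hf
    subst hf
    exact f.eval_eq_zero_of_not_evenBlocks hc0 hcS (fun l hlS hl' _ => hcum l hlS hl') hS
      f.maxBlockSize_le_length (not_evenBlocks hl)

theorem forall_even_map_mul_iff [Monoid A] (B : Submonoid A) (a : A) {P : List A → Prop}
    (hP : ∀ b ∈ B, ∀ x t, P (x :: t) → P (b * x :: t)) :
    (∀ bs : List A, (∀ b ∈ bs, b ∈ B) → Even bs.length →
        P (a :: bs.map (fun b => b * a))) ↔
      ∀ l : List A, (∀ x ∈ l, x ∈ (fun b => b * a) '' (B : Set A)) → Odd l.length →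
        P l := by
  constructor
  · rintro h (_ | ⟨x, t⟩) hl hodd
    · simp at hodd
    obtain ⟨b, hb, rfl⟩ := hl x List.mem_cons_self
    choose! g hgB hg using fun y hy => hl y (List.mem_cons_of_mem _ hy)
    have ht : (t.map g).map (fun b => b * a) = t := by
      rw [List.map_map]
      exact (List.map_congr_left hg).trans (List.map_id t)
    refine hP b hb a t ?_
    rw [← ht]
    exact h _ (by simpa using hgB) (by simpa [Nat.odd_add_one] using hodd)
  · intro h bs hB heven
    refine h _ ?_ (by simpa using heven.add_one)
    simp only [List.forall_mem_cons, List.forall_mem_map]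
    exact ⟨⟨1, B.one_mem, one_mul a⟩, fun b hb => ⟨b, hB b hb, rfl⟩⟩

/-- Let `(A, φ)` be a `B`-valued probability space and let the `B`-valued cumulants
`c` be determined from the moments by Möbius inversion, i.e. by the moment–cumulant
formula `φ(a₁⋯aₙ) = Σ_{π ∈ NC(n)} ĉ(π)(a₁ ⊗ ⋯ ⊗ aₙ)` (noncrossing partitions being
encoded as forests).  Then `a` is `B`-even (all odd `B`-valued moments
`φ(a b₂ a ⋯ b_m a)`, `m` odd, vanish) if and only if all odd `B`-valued cumulants
`c^{(m)}(a ⊗ b₂a ⊗ ⋯ ⊗ b_m a)` vanish. -/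
theorem stmt_16
    {A : Type u} [Ring A] (B : Subring A) (φ : A → A)
    (hmem : ∀ x, φ x ∈ B)
    (hadd : ∀ x y, φ (x + y) = φ x + φ y)
    (hid : ∀ b ∈ B, φ b = b)
    (hbimod : ∀ b ∈ B, ∀ b' ∈ B, ∀ x : A, φ (b * x * b') = b * φ x * b')
    (c : List A → A) (hcB : ∀ l, c l ∈ B)
    (hmc : ∀ l : List A, l ≠ [] →
      φ l.prod = ∑ᶠ f ∈ {f : NCForest A | f.letters = l}, f.eval c)
    (a : A) :
    (∀ bs : List A, (∀ b ∈ bs, b ∈ B) → Even bs.length →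
        φ (a * (bs.map (fun b => b * a)).prod) = 0)
      ↔
    (∀ bs : List A, (∀ b ∈ bs, b ∈ B) → Even bs.length →
        c (a :: bs.map (fun b => b * a)) = 0) := by
  have hmc : MomentCumulantFormula φ c := hmc
  have hφ : ∀ b ∈ B, ∀ x, φ (b * x) = b * φ x := fun b hb x => by
    simpa using hbimod b hb 1 B.one_mem x
  have hmoments := forall_even_map_mul_iff B.toSubmonoid a (P := fun l => φ l.prod = 0)
    fun b hb x t h => by simp only [List.prod_cons, mul_assoc, hφ b hb] at h ⊢; rw [h, mul_zero]
  have hcumulants := forall_even_map_mul_iff B.toSubmonoid a (P := fun l => c l = 0)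
    fun b hb x t h => by rw [hmc.cumulant_mul_cons (hφ b hb), h, mul_zero]
  simp only [List.prod_cons] at hmoments
  refine hmoments.trans <|
    (hmc.odd_moments_eq_zero_iff (AddMonoidHom.mk' φ hadd).map_zero ?_).trans hcumulants.symm
  rintro l _ ⟨b, hb, rfl⟩
  exact ⟨c l * b, B.mul_mem (hcB l) hb, mul_assoc _ _ _⟩
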